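/- arXiv:1806.02928 — 2 statements merged into one kernel-verified Lean document; each statement's English description precedes it below -/
import Mathlib

section
/- Let (p_i/q_i)_{i≥1} be a sequence of reduced fractions with strictly increasing positive denominators q_i, such that p_{i+1} q_i − p_i q_{i+1} = (−1)^{i+1} for all i ≥ 1. Then the sequence (p_i/q_i) converges to a real number ξ, and the fractions p_i/q_i are precisely the convergents of the continued fraction expansion of ξ whose denominators are at least q_1, listed consecutively. -/
/-!
By Cramer's rule, three consecutive fractions `p / q` with determinants `±1` satisfy the continuant
recurrence with a positive integer partial quotient; running Euclid's algorithm backwards from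
`p₁ / q₁` supplies the earlier partial quotients. For the resulting sequence `a`, the convergents
alternate around a limit `ξ`, so the numbers `|qₙ ξ - pₙ|` are positive and satisfy the same
recurrence. Their successive ratios are then the complete quotients of `ξ`, and the continued
fraction algorithm applied to `ξ` returns exactly `a`.
-/

open Filter Topology

theorem eq_of_two_step_recurrence {c u v : ℕ → ℤ} (hu : ∀ n, u (n + 2) = c n * u (n + 1) + u n)
    (hv : ∀ n, v (n + 2) = c n * v (n + 1) + v n) (h₀ : u 0 = v 0) (h₁ : u 1 = v 1) :
    ∀ n, u n = v n
  | 0 => h₀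
  | 1 => h₁
  | n + 2 => by
    rw [hu, hv, eq_of_two_step_recurrence hu hv h₀ h₁ n,
      eq_of_two_step_recurrence hu hv h₀ h₁ (n + 1)]

-- Cramer's rule for `(P, Q) (i + 2) = x • (P, Q) (i + 1) + (P, Q) i`.
def partialQuot (P Q : ℕ → ℤ) (i : ℕ) : ℤ := (-1) ^ (i + 1) * (P (i + 2) * Q i - P i * Q (i + 2))

section partialQuot

variable {P Q : ℕ → ℤ} (hdet : ∀ i, P (i + 1) * Q i - P i * Q (i + 1) = (-1) ^ (i + 1))
include hdet

theorem partialQuot_spec (i : ℕ) :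
    P (i + 2) = partialQuot P Q i * P (i + 1) + P i ∧
      Q (i + 2) = partialQuot P Q i * Q (i + 1) + Q i := by
  have h₁ := hdet i
  have h₂ : P (i + 2) * Q (i + 1) - P (i + 1) * Q (i + 2) = -(-1) ^ (i + 1) := by
    rw [hdet (i + 1), pow_succ _ (i + 1)]; ring
  have hε : ((-1 : ℤ) ^ (i + 1)) * (-1) ^ (i + 1) = 1 := by rw [← pow_add, ← two_mul, pow_mul]; simp
  unfold partialQuot
  set ε : ℤ := (-1) ^ (i + 1)
  constructor
  · linear_combination (-ε * P (i + 2)) * h₁ + (-ε * P i) * h₂ - (P (i + 2) - P i) * hε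
  · linear_combination (-ε * Q (i + 2)) * h₁ + (-ε * Q i) * h₂ - (Q (i + 2) - Q i) * hε

theorem one_le_partialQuot {i : ℕ} (hQ : Q i < Q (i + 2)) (hQ₁ : 0 < Q (i + 1)) :
    1 ≤ partialQuot P Q i := by
  have h := (partialQuot_spec hdet i).2
  by_contra! hx
  nlinarith

end partialQuot

theorem exists_pos_mul_sub_of_alternating {c d : ℕ → ℝ} (hd : StrictAnti d)
    (hd₀ : Tendsto d atTop (𝓝 0)) (hc : ∀ m, c (m + 1) - c m = (-1) ^ m * d m) :
    ∃ ξ, ∀ m, 0 < (-1) ^ m * (ξ - c m) := by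
  have hsum : ∀ m, c m - c 0 = ∑ i ∈ Finset.range m, (-1) ^ i * d i := by
    intro m
    induction m with
    | zero => simp
    | succ m ih => rw [Finset.sum_range_succ, ← hc, ← ih]; ring
  have hstep : ∀ m, (-1) ^ m * (c (m + 2) - c m) = d m - d (m + 1) := by
    intro m
    have hsq : ((-1 : ℝ) ^ m) ^ 2 = 1 := by rw [← pow_mul, mul_comm, pow_mul]; norm_num
    linear_combination (-1) ^ m * (hc (m + 1) + hc m) + (d m - d (m + 1)) * hsq
  obtain ⟨l, hl⟩ := hd.antitone.tendsto_alternating_series_of_tendsto_zero hd₀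
  refine ⟨c 0 + l, fun m => ?_⟩
  have hlt := hstep m
  have hdm : d (m + 1) < d m := hd (Nat.lt_succ_self m)
  obtain ⟨j, rfl | rfl⟩ := Nat.even_or_odd' m
  · have hle := hd.antitone.alternating_series_le_tendsto hl (j + 1)
    rw [show 2 * (j + 1) = 2 * j + 2 by ring, ← hsum] at hle
    rw [pow_mul] at hlt ⊢
    norm_num at hlt ⊢
    linarith
  · have hle := hd.antitone.tendsto_le_alternating_series hl (j + 1)
    rw [show 2 * (j + 1) + 1 = 2 * j + 1 + 2 by ring, ← hsum] at hle
    rw [pow_succ, pow_mul] at hlt ⊢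
    norm_num at hlt ⊢
    linarith

theorem eq_one_of_det_of_mod_eq_zero {p r ε : ℤ} {q s : ℕ} (hε : ε = 1 ∨ ε = -1)
    (hdet : p * s - r * q = ε) (hqs : q % s = 0) : s = 1 := by
  have hsq : (s : ℤ) ∣ q := Int.natCast_dvd_natCast.2 (Nat.dvd_of_mod_eq_zero hqs)
  have hsε : (s : ℤ) ∣ ε := hdet ▸ dvd_sub (dvd_mul_left _ _) (dvd_mul_of_dvd_right hsq _)
  rcases hε with rfl | rfl
  · exact Nat.dvd_one.mp (by exact_mod_cast hsε)
  · exact Nat.dvd_one.mp (by exact_mod_cast dvd_neg.mp hsε)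

namespace Continuant

/-- `num a (n + 1) / den a (n + 1)` is the `n`-th convergent of `[a 0; a 1, a 2, …]`;
index `0` holds the conventional pair `(1, 0)`. -/
def num (a : ℕ → ℤ) : ℕ → ℤ
  | 0 => 1
  | 1 => a 0
  | n + 2 => a (n + 1) * num a (n + 1) + num a n

def den (a : ℕ → ℤ) : ℕ → ℤ
  | 0 => 0
  | 1 => 1
  | n + 2 => a (n + 1) * den a (n + 1) + den a n

variable {a : ℕ → ℤ}

theorem num_succ_mul_den_sub_num_mul_den_succ (a : ℕ → ℤ) :
    ∀ n, num a (n + 1) * den a n - num a n * den a (n + 1) = (-1) ^ (n + 1)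
  | 0 => by simp [num, den]
  | n + 1 => by
    rw [num, den, pow_succ]
    linear_combination -num_succ_mul_den_sub_num_mul_den_succ a n

theorem den_succ_pos (ha : ∀ n, 1 ≤ n → 1 ≤ a n) : ∀ n, 0 < den a (n + 1)
  | 0 => by simp [den]
  | n + 1 => by
    have h₀ : 0 ≤ den a n := by
      cases n with
      | zero => simp [den]
      | succ m => exact (den_succ_pos ha m).le
    rw [den]
    nlinarith [ha (n + 1) (by omega), den_succ_pos ha n]

theorem den_nonneg (ha : ∀ n, 1 ≤ n → 1 ≤ a n) : ∀ n, 0 ≤ den a n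
  | 0 => le_rfl
  | n + 1 => (den_succ_pos ha n).le

theorem den_mono (ha : ∀ n, 1 ≤ n → 1 ≤ a n) : Monotone (den a) := by
  refine monotone_nat_of_le_succ fun n => ?_
  rcases n with _ | n
  · simp [den]
  · rw [den]
    nlinarith [ha (n + 1) (by omega), den_succ_pos ha n, den_nonneg ha n]

theorem den_succ_lt_den_add_three (ha : ∀ n, 1 ≤ n → 1 ≤ a n) (n : ℕ) :
    den a (n + 1) < den a (n + 3) := by
  rw [den]
  nlinarith [ha (n + 2) (by omega), den_succ_pos ha (n + 1), den_mono ha (show n ≤ n + 2 by omega)]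

theorem le_den_succ (ha : ∀ n, 1 ≤ n → 1 ≤ a n) : ∀ n : ℕ, (n : ℤ) ≤ den a (n + 1)
  | 0 => by simp [den]
  | 1 => by simpa [den] using ha 1 le_rfl
  | n + 2 => by
    have ih : ((n + 1 : ℕ) : ℤ) ≤ den a (n + 2) := le_den_succ ha (n + 1)
    rw [den]
    push_cast at ih ⊢
    nlinarith [le_mul_of_one_le_left (den_nonneg ha (n + 2)) (ha (n + 2) (by omega)),
      den_succ_pos ha n]

/-- Euclid's algorithm on `(q, s)`, run backwards; the arbitrary tail `b` lets the induction
append one partial quotient at a time. -/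
theorem exists_num_den_eq (q : ℕ) : ∀ s < q, ∀ (p r ε : ℤ) (b : ℕ → ℤ), (ε = 1 ∨ ε = -1) →
    p * s - r * q = ε → (s = 0 → ε = -1) → (∀ n, 1 ≤ b n) →
    ∃ (k : ℕ) (a : ℕ → ℤ), (∀ n, 1 ≤ n → 1 ≤ a n) ∧ (∀ n, a (n + k + 1) = b n) ∧
      num a k = r ∧ den a k = s ∧ num a (k + 1) = p ∧ den a (k + 1) = q := by
  induction q using Nat.strong_induction_on with
  | _ q ih =>
  intro s hsq p r ε b hε hdet hs₀ hb
  rcases Nat.eq_zero_or_pos s with rfl | hs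
  · obtain rfl := hs₀ rfl
    have hrq : r * q = 1 := by push_cast at hdet; linarith
    have hq : (q : ℤ) = 1 := Int.eq_one_of_mul_eq_one_left (by positivity) hrq
    have hr : r = 1 := by rw [hq] at hrq; simpa using hrq
    refine ⟨0, fun | 0 => p | n + 1 => b n, ?_, fun n => rfl, by simp [num, hr], by simp [den],
      by simp [num], by simp [den, hq]⟩
    rintro (_ | n) hn
    exacts [absurd hn (by omega), hb n]
  by_cases hpar : s = 1 ∧ ε = -1
  · -- `[…, q - 1, 1]` and `[…, q]` have the same value but partial quotient sequences of
    -- opposite parity, which flips the sign of the determinant.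
    obtain ⟨rfl, rfl⟩ := hpar
    have hp : p = r * q - 1 := by push_cast at hdet; linarith
    refine ⟨2, fun | 0 => r - 1 | 1 => 1 | 2 => q - 1 | n + 3 => b n, ?_, fun n => rfl,
      by simp [num], by simp [den], by simp [num, hp]; ring, by simp [den]⟩
    rintro (_ | _ | _ | n) hn
    exacts [absurd hn (by omega), le_rfl, show (1 : ℤ) ≤ q - 1 by omega, hb n]
  set x := q / s
  set s' := q % s
  have hq : q = x * s + s' := by rw [Nat.mul_comm]; exact (Nat.div_add_mod q s).symm
  have hdet' : r * s' - (p - x * r) * s = -ε := by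
    rw [hq] at hdet; push_cast at hdet; linear_combination -hdet
  have hs' : s' = 0 → -ε = -1 := by
    intro hs'
    have hs1 := eq_one_of_det_of_mod_eq_zero hε hdet hs'
    rcases hε with rfl | rfl
    · rfl
    · exact absurd ⟨hs1, rfl⟩ hpar
  have hx : 1 ≤ x := (Nat.one_le_div_iff hs).mpr hsq.le
  obtain ⟨k, a, ha, hab, hr, hs, hp', hq'⟩ := ih s hsq s' (Nat.mod_lt _ hs) r (p - x * r) (-ε)
    (fun | 0 => x | n + 1 => b n) (by rcases hε with rfl | rfl <;> simp) hdet' hs'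
    (by rintro (_ | n); exacts [show (1 : ℤ) ≤ x by exact_mod_cast hx, hb n])
  have hak : a (k + 1) = x := by simpa using hab 0
  refine ⟨k + 1, a, ha, fun n => by
    rw [show n + (k + 1) + 1 = n + 1 + k + 1 by omega]; exact hab (n + 1), hp', hq', ?_, ?_⟩
  · rw [num, hak, hp', hr]; ring
  · rw [den, hak, hq', hs, hq]; push_cast; ring

theorem num_den_add_eq {a P Q : ℕ → ℤ} {k : ℕ}
    (hdet : ∀ i, P (i + 1) * Q i - P i * Q (i + 1) = (-1) ^ (i + 1))
    (hak : ∀ n, a (n + k + 1) = partialQuot P Q n) (hP₀ : num a k = P 0) (hQ₀ : den a k = Q 0)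
    (hP₁ : num a (k + 1) = P 1) (hQ₁ : den a (k + 1) = Q 1) (n : ℕ) :
    num a (k + n) = P n ∧ den a (k + n) = Q n := by
  have ha : ∀ n, a (k + n + 1) = partialQuot P Q n := fun n => by rw [← hak, Nat.add_comm k]
  refine ⟨eq_of_two_step_recurrence (u := fun n => num a (k + n)) (fun n => ?_)
    (fun n => (partialQuot_spec hdet n).1) hP₀ hP₁ n,
    eq_of_two_step_recurrence (u := fun n => den a (k + n)) (fun n => ?_)
    (fun n => (partialQuot_spec hdet n).2) hQ₀ hQ₁ n⟩
  · show num a (k + n + 2) = _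
    rw [num, ha]; rfl
  · show den a (k + n + 2) = _
    rw [den, ha]; rfl

theorem strictAnti_inv_den_mul_den (ha : ∀ n, 1 ≤ n → 1 ≤ a n) :
    StrictAnti fun m => ((den a (m + 1) * den a (m + 2) : ℤ) : ℝ)⁻¹ := by
  refine strictAnti_nat_of_succ_lt fun m => (inv_lt_inv₀ ?_ ?_).2 ?_
  · exact_mod_cast mul_pos (den_succ_pos ha (m + 1)) (den_succ_pos ha (m + 2))
  · exact_mod_cast mul_pos (den_succ_pos ha m) (den_succ_pos ha (m + 1))
  · rw [mul_comm (den a (m + 1))]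
    exact_mod_cast mul_lt_mul_of_pos_left (den_succ_lt_den_add_three ha m)
      (den_succ_pos ha (m + 1))

theorem tendsto_inv_den_mul_den (ha : ∀ n, 1 ≤ n → 1 ≤ a n) :
    Tendsto (fun m => ((den a (m + 1) * den a (m + 2) : ℤ) : ℝ)⁻¹) atTop (𝓝 0) := by
  refine tendsto_inv_atTop_zero.comp
    (tendsto_atTop_mono (fun m => ?_) tendsto_natCast_atTop_atTop)
  have h : ((m + 1 : ℕ) : ℤ) ≤ den a (m + 2) := le_den_succ ha (m + 1)
  have h' : den a (m + 2) ≤ den a (m + 1) * den a (m + 2) :=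
    le_mul_of_one_le_left (den_nonneg ha _) (den_succ_pos ha m)
  push_cast at h
  exact_mod_cast (by omega : (m : ℤ) ≤ den a (m + 1) * den a (m + 2))

theorem convergent_succ_sub_convergent (ha : ∀ n, 1 ≤ n → 1 ≤ a n) (m : ℕ) :
    (num a (m + 2) : ℝ) / den a (m + 2) - (num a (m + 1) : ℝ) / den a (m + 1) =
      (-1) ^ m * ((den a (m + 1) * den a (m + 2) : ℤ) : ℝ)⁻¹ := by
  have hdet : (num a (m + 2) * den a (m + 1) - num a (m + 1) * den a (m + 2) : ℝ) = (-1) ^ m := by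
    have := num_succ_mul_den_sub_num_mul_den_succ a (m + 1)
    rw [show (-1 : ℤ) ^ (m + 1 + 1) = (-1) ^ m by ring] at this
    exact_mod_cast this
  have : (0 : ℝ) < den a (m + 1) := by exact_mod_cast den_succ_pos ha m
  have : (0 : ℝ) < den a (m + 2) := by exact_mod_cast den_succ_pos ha (m + 1)
  push_cast
  field_simp
  linear_combination hdet

theorem exists_pos_neg_one_pow_mul_den_mul_sub_num (ha : ∀ n, 1 ≤ n → 1 ≤ a n) :
    ∃ ξ : ℝ, ∀ n, 0 < (-1) ^ (n + 1) * (den a n * ξ - num a n) := by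
  obtain ⟨ξ, hξ⟩ := exists_pos_mul_sub_of_alternating
    (c := fun m => (num a (m + 1) : ℝ) / den a (m + 1)) (strictAnti_inv_den_mul_den ha)
    (tendsto_inv_den_mul_den ha) (convergent_succ_sub_convergent ha)
  refine ⟨ξ, ?_⟩
  rintro (_ | m)
  · simp [num, den]
  · have hD : (0 : ℝ) < den a (m + 1) := by exact_mod_cast den_succ_pos ha m
    have e : (-1) ^ (m + 1 + 1) * ((den a (m + 1) : ℝ) * ξ - num a (m + 1)) =
        den a (m + 1) * ((-1) ^ m * (ξ - num a (m + 1) / den a (m + 1))) := by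
      field_simp
      ring
    exact e ▸ mul_pos hD (hξ m)

end Continuant

namespace GenContFract

theorem contsAux_eq_num_den {K : Type*} [DivisionRing K] {g : GenContFract K} {a : ℕ → ℤ}
    (hh : g.h = a 0) (hs : ∀ n, g.s.get? n = some ⟨1, a (n + 1)⟩) :
    ∀ n, g.contsAux n = ⟨Continuant.num a n, Continuant.den a n⟩
  | 0 => by simp [contsAux, Continuant.num, Continuant.den]
  | 1 => by simp [contsAux, Continuant.num, Continuant.den, hh]
  | n + 2 => by
    rw [contsAux_recurrence (hs n) (contsAux_eq_num_den hh hs n)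
      (contsAux_eq_num_den hh hs (n + 1))]
    simp [Continuant.num, Continuant.den]

end GenContFract

section FloorRing

variable {K : Type*} [Field K] [LinearOrder K] [IsStrictOrderedRing K] [FloorRing K]

theorem Int.floor_intCast_add_inv (z : ℤ) {t : K} (ht : 1 < t) : ⌊(z : K) + t⁻¹⌋ = z := by
  rw [Int.floor_intCast_add, add_eq_left, Int.floor_eq_zero_iff]
  exact ⟨(inv_pos.2 (by linarith)).le, inv_lt_one_of_one_lt₀ ht⟩

theorem Int.fract_intCast_add_inv (z : ℤ) {t : K} (ht : 1 < t) :
    Int.fract ((z : K) + t⁻¹) = t⁻¹ := by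
  rw [Int.fract_intCast_add, Int.fract_eq_self]
  exact ⟨(inv_pos.2 (by linarith)).le, inv_lt_one_of_one_lt₀ ht⟩

/-- `T n` plays the role of the complete quotient `[a (n + 1); a (n + 2), …]`. -/
theorem GenContFract.of_s_get?_eq_of_eq_add_inv {a : ℕ → ℤ} {T : ℕ → K} (hT : ∀ n, 1 < T n)
    (hrec : ∀ n, T n = a (n + 1) + (T (n + 1))⁻¹) {v : K} (hv : v = a 0 + (T 0)⁻¹) (n : ℕ) :
    (GenContFract.of v).s.get? n = some ⟨1, a (n + 1)⟩ := by
  have hfr : Int.fract v = (T 0)⁻¹ := hv ▸ Int.fract_intCast_add_inv _ (hT 0)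
  induction n generalizing a T v with
  | zero =>
    have hne : Int.fract v ≠ 0 := hfr ▸ (inv_pos.2 (zero_lt_one.trans (hT 0))).ne'
    rw [show (GenContFract.of v).s.get? 0 = (GenContFract.of v).s.head from rfl, of_s_head hne,
      hfr, inv_inv, hrec 0, Int.floor_intCast_add_inv _ (hT 1)]
  | succ n ih =>
    rw [of_s_succ, hfr, inv_inv]
    exact ih (a := fun m => a (m + 1)) (fun m => hT (m + 1)) (fun m => hrec (m + 1)) (hrec 0)
      (Int.fract_intCast_add_inv _ (hT 1) ▸ congrArg Int.fract (hrec 0))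

end FloorRing

namespace Continuant

theorem exists_real_nums_dens {a : ℕ → ℤ} (ha : ∀ n, 1 ≤ n → 1 ≤ a n) : ∃ ξ : ℝ, ∀ n,
    (GenContFract.of ξ).nums n = num a (n + 1) ∧ (GenContFract.of ξ).dens n = den a (n + 1) := by
  obtain ⟨ξ, hG⟩ := exists_pos_neg_one_pow_mul_den_mul_sub_num ha
  -- `G n = |den a n * ξ - num a n|`, and `G n / G (n + 1)` is the `n`-th complete quotient of `ξ`.
  set G : ℕ → ℝ := fun n => (-1) ^ (n + 1) * (den a n * ξ - num a n)
  replace hG : ∀ n, 0 < G n := hG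
  have hGrec : ∀ n, G n = a (n + 1) * G (n + 1) + G (n + 2) := by
    intro n
    simp only [G, num, den]
    push_cast
    ring
  have hT : ∀ n, 1 < G n / G (n + 1) := fun n => (one_lt_div (hG (n + 1))).2 <| by
    have hA : (1 : ℝ) ≤ a (n + 1) := by exact_mod_cast ha (n + 1) (by omega)
    nlinarith [hGrec n, hG (n + 2), mul_le_mul_of_nonneg_right hA (hG (n + 1)).le]
  have hTrec : ∀ n, G n / G (n + 1) = a (n + 1) + (G (n + 1) / G (n + 2))⁻¹ := by
    intro n
    have := (hG (n + 1)).ne'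
    rw [inv_div, hGrec n, add_div, mul_div_cancel_right₀ _ this]
  have hξ : ξ = a 0 + (G 0 / G 1)⁻¹ := by simp [G, num, den]
  have hh : (GenContFract.of ξ).h = a 0 := by
    rw [GenContFract.of_h_eq_floor, hξ, Int.floor_intCast_add_inv _ (hT 0)]
  have hcont := GenContFract.contsAux_eq_num_den hh
    (GenContFract.of_s_get?_eq_of_eq_add_inv hT hTrec hξ)
  exact ⟨ξ, fun n => by simp [GenContFract.num_eq_conts_a, GenContFract.den_eq_conts_b,
    GenContFract.nth_cont_eq_succ_nth_contAux, hcont]⟩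

end Continuant

theorem exists_prev_convergent {p₁ p₂ : ℤ} {q₁ q₂ : ℕ} (hq₁ : 0 < q₁)
    (h : p₂ * q₁ - p₁ * q₂ = 1) : ∃ (r : ℤ) (s : ℕ), s < q₁ ∧ p₁ * s - r * q₁ = -1 := by
  refine ⟨p₂ - (q₂ / q₁ : ℕ) * p₁, q₂ % q₁, Nat.mod_lt _ hq₁, ?_⟩
  have hmod : ((q₂ % q₁ : ℕ) : ℤ) = q₂ - q₁ * (q₂ / q₁ : ℕ) := by
    have := Nat.div_add_mod q₂ q₁
    omega
  rw [hmod]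
  linear_combination -h

theorem stmt3_general (p : ℕ → ℤ) (q : ℕ → ℕ)
    (hq_pos : ∀ i ≥ 1, 0 < q i)
    (hq_mono : ∀ i ≥ 1, q i < q (i + 1))
    (hdet : ∀ i ≥ 1, p (i + 1) * (q i : ℤ) - p i * (q (i + 1) : ℤ) = (-1) ^ (i + 1)) :
    ∃ ξ : ℝ,
      Filter.Tendsto (fun i => (p i : ℝ) / (q i : ℝ)) Filter.atTop (nhds ξ) ∧
      ∃ k : ℕ,
        (∀ i ≥ 1, (GenContFract.of ξ).convs (k + (i - 1)) = (p i : ℝ) / (q i : ℝ) ∧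
          (GenContFract.of ξ).dens (k + (i - 1)) = (q i : ℝ)) ∧
        (∀ n < k, (GenContFract.of ξ).dens n < (q 1 : ℝ)) := by
  obtain ⟨r₀, s₀, hs₀, hdet₀⟩ :=
    exists_prev_convergent (hq_pos 1 le_rfl) (by simpa using hdet 1 le_rfl)
  set P : ℕ → ℤ := fun i => if i = 0 then r₀ else p i
  set Q : ℕ → ℤ := fun i => if i = 0 then (s₀ : ℤ) else q i
  have hPQ : ∀ i, P (i + 1) * Q i - P i * Q (i + 1) = (-1) ^ (i + 1) := by
    rintro (_ | i)
    · simpa [P, Q] using hdet₀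
    · simpa [P, Q] using hdet (i + 1) (by omega)
  have hquot : ∀ i, 1 ≤ partialQuot P Q i := by
    intro i
    refine one_le_partialQuot hPQ ?_ (by simpa [P, Q] using hq_pos (i + 1) (by omega))
    rcases i with _ | i
    · simpa [P, Q] using hs₀.trans (hq_mono 1 le_rfl)
    · simpa [P, Q] using (hq_mono (i + 1) (by omega)).trans (hq_mono (i + 2) (by omega))
  obtain ⟨k, a, ha, hak, hr, hs, hp, hq⟩ := Continuant.exists_num_den_eq (q 1) s₀ hs₀ (p 1) r₀
    (-1) (partialQuot P Q) (Or.inr rfl) hdet₀ (fun _ => rfl) hquot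
  obtain ⟨ξ, hξ⟩ := Continuant.exists_real_nums_dens ha
  have hconv : ∀ i ≥ 1, (GenContFract.of ξ).convs (k + (i - 1)) = (p i : ℝ) / (q i : ℝ) ∧
      (GenContFract.of ξ).dens (k + (i - 1)) = (q i : ℝ) := by
    rintro (_ | j) hj
    · omega
    obtain ⟨hpj, hqj⟩ := Continuant.num_den_add_eq hPQ hak hr hs hp hq (j + 1)
    simp only [P, Q, if_neg j.succ_ne_zero, ← add_assoc] at hpj hqj
    rw [GenContFract.conv_eq_num_div_den, (hξ _).1, (hξ _).2, Nat.add_sub_cancel, hpj, hqj]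
    simp
  refine ⟨ξ, ?_, k, hconv, fun n hn => ?_⟩
  · have htail : Tendsto (fun i => k + (i - 1)) atTop atTop :=
      tendsto_atTop_atTop.2 fun b => ⟨b + 1, fun i hi => by omega⟩
    refine ((GenContFract.of_convergence ξ).comp htail).congr' ?_
    filter_upwards [eventually_ge_atTop 1] with i hi using (hconv i hi).1
  · rw [(hξ n).2]
    have hle := Continuant.den_mono ha (show n + 1 ≤ k by omega)
    rw [hs] at hle
    exact_mod_cast hle.trans_lt (by exact_mod_cast hs₀)

/-- if `(p_i/q_i)_{i≥1}` are reduced fractions with strictly increasing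
positive denominators satisfying `p_{i+1} q_i − p_i q_{i+1} = (−1)^{i+1}`, then
`p_i/q_i` converges to a real number `ξ`, and the `p_i/q_i` are exactly the
convergents of the continued fraction expansion of `ξ` whose denominators are at
least `q 1`, listed consecutively (i.e. they form a tail, starting at some index `k`,
of the convergent sequence of `ξ`, and all earlier convergents have denominator
smaller than `q 1`). -/
theorem stmt3 (p : ℕ → ℤ) (q : ℕ → ℕ)
    (hq_pos : ∀ i ≥ 1, 0 < q i)
    (hq_mono : ∀ i ≥ 1, q i < q (i + 1))
    (hred : ∀ i ≥ 1, Nat.Coprime (p i).natAbs (q i))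
    (hdet : ∀ i ≥ 1, p (i + 1) * (q i : ℤ) - p i * (q (i + 1) : ℤ) = (-1) ^ (i + 1)) :
    ∃ ξ : ℝ,
      Filter.Tendsto (fun i => (p i : ℝ) / (q i : ℝ)) Filter.atTop (nhds ξ) ∧
      ∃ k : ℕ,
        (∀ i ≥ 1, (GenContFract.of ξ).convs (k + (i - 1)) = (p i : ℝ) / (q i : ℝ) ∧
          (GenContFract.of ξ).dens (k + (i - 1)) = (q i : ℝ)) ∧
        (∀ n < k, (GenContFract.of ξ).dens n < (q 1 : ℝ)) :=
  stmt3_general p q hq_pos hq_mono hdet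
end

section
/- Let b ≥ 3, digits 0 ≤ d_1 < d_2 ≤ b−1, u = d_2 − d_1, and write u = u_1 u_2 with u_1 the part of u whose prime factors divide b and u_2 coprime to b. Set N = φ(u_2^2 (b−1)^2), m_1 = N − 1, and S = 1 + b + ... + b^{N−1}. Then gcd(d_1 S + u, b^N − 1) = u_2. -/
/-!
Euler's theorem gives `u₂²(b-1)² ∣ b^N - 1 = (b-1)S`, so `S = u₂ k` with `(b-1) ∣ k`.
Then `d₁S + u = u₂(d₁k + u₁)` and `b^N - 1 = u₂(b-1)k`, and `d₁k + u₁` is coprime to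
`(b-1)k` because `u₁` is: its prime factors divide `b`, which is coprime to `b^N - 1`.
-/

open Finset

namespace Nat

theorem coprime_pow_sub_one {b N : ℕ} (hb : 0 < b) (hN : N ≠ 0) : Coprime b (b ^ N - 1) :=
  ((coprime_self_sub_right (one_le_pow _ _ hb)).mpr (coprime_one_right _)).coprime_dvd_left
    (dvd_pow_self b hN)

theorem sub_one_mul_geom_sum {b : ℕ} (hb : 0 < b) (N : ℕ) :
    (b - 1) * ∑ j ∈ range N, b ^ j = b ^ N - 1 := by
  zify [hb, one_le_pow N b hb]
  rw [mul_comm, geom_sum_mul]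

theorem gcd_mul_add_mul_eq {d u₁ u₂ a S : ℕ} (hS : u₂ * a ∣ S)
    (hu₁ : Coprime u₁ (a * S)) :
    gcd (d * S + u₁ * u₂) (a * S) = u₂ := by
  obtain ⟨j, rfl⟩ := hS
  have hk : Coprime u₁ (a * j) := hu₁.coprime_dvd_right <|
    dvd_mul_of_dvd_right (Dvd.intro_left _ (mul_assoc u₂ a j).symm) a
  have ha : Coprime u₁ a := hk.coprime_dvd_right (dvd_mul_right a j)
  have hcop : Coprime (d * (a * j) + u₁) (a * (a * j)) := by
    refine Coprime.mul_right ?_ ((coprime_mul_right_add_left _ _ _).mpr hk)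
    rw [mul_left_comm]
    exact (coprime_mul_left_add_left _ _ _).mpr ha
  calc gcd (d * (u₂ * a * j) + u₁ * u₂) (a * (u₂ * a * j))
      = gcd (u₂ * (d * (a * j) + u₁)) (u₂ * (a * (a * j))) := by ring_nf
    _ = u₂ := by rw [gcd_mul_left, hcop.gcd_eq_one, mul_one]

end Nat

theorem stmt6_general (b d₁ d₂ u₁ u₂ : ℕ) (hb : 3 ≤ b) (hd : d₁ < d₂)
    (hfac : d₂ - d₁ = u₁ * u₂)
    (h₁ : ∀ p : ℕ, p.Prime → p ∣ u₁ → p ∣ b)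
    (h₂ : ∀ p : ℕ, p.Prime → p ∣ u₂ → ¬ p ∣ b) :
    Nat.gcd
      (d₁ * (∑ j ∈ Finset.range (Nat.totient (u₂ ^ 2 * (b - 1) ^ 2)), b ^ j) + (d₂ - d₁))
      (b ^ Nat.totient (u₂ ^ 2 * (b - 1) ^ 2) - 1) = u₂ := by
  set N := Nat.totient (u₂ ^ 2 * (b - 1) ^ 2)
  have hb₀ : 0 < b := by omega
  have hb₁ : 0 < b - 1 := by omega
  have hu₂ : u₂ ≠ 0 := by rintro rfl; omega
  have hN : N ≠ 0 := (Nat.totient_pos.mpr (by positivity)).ne'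
  have hbu₂ : Nat.Coprime b u₂ := Nat.coprime_of_dvd fun p hp hpb hpu => h₂ p hp hpu hpb
  have hbb : Nat.Coprime b (b - 1) :=
    (Nat.coprime_self_sub_right hb₀).mpr (Nat.coprime_one_right b)
  have heuler : u₂ ^ 2 * (b - 1) ^ 2 ∣ b ^ N - 1 :=
    (Nat.modEq_iff_dvd' (Nat.one_le_pow _ _ hb₀)).mp
      (Nat.ModEq.pow_totient ((hbu₂.pow_right 2).mul_right (hbb.pow_right 2))).symm
  have hS : u₂ * (b - 1) ∣ ∑ j ∈ Finset.range N, b ^ j := by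
    refine Nat.dvd_of_mul_dvd_mul_left hb₁ ?_
    rw [Nat.sub_one_mul_geom_sum hb₀]
    exact (Dvd.intro u₂ (by ring)).trans heuler
  have hu₁ : Nat.Coprime u₁ (b ^ N - 1) := Nat.coprime_of_dvd fun p hp hpu hpM =>
    hp.ne_one (Nat.eq_one_of_dvd_coprimes (Nat.coprime_pow_sub_one hb₀ hN) (h₁ p hp hpu) hpM)
  rw [← Nat.sub_one_mul_geom_sum hb₀] at hu₁ ⊢
  rw [hfac]
  exact Nat.gcd_mul_add_mul_eq hS hu₁

/-- for `b ≥ 3`, digits `0 ≤ d₁ < d₂ ≤ b−1`, `u = d₂ − d₁ = u₁ u₂`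
with every prime factor of `u₁` dividing `b` and no prime factor of `u₂` dividing
`b`, setting `N = φ(u₂²(b−1)²)` and `S = 1 + b + ⋯ + b^{N−1}`, one has
`gcd(d₁ S + u, b^N − 1) = u₂`. -/
theorem stmt6 (b d₁ d₂ u₁ u₂ : ℕ) (hb : 3 ≤ b) (hd : d₁ < d₂) (hd₂ : d₂ ≤ b - 1)
    (hfac : d₂ - d₁ = u₁ * u₂)
    (h₁ : ∀ p : ℕ, p.Prime → p ∣ u₁ → p ∣ b)
    (h₂ : ∀ p : ℕ, p.Prime → p ∣ u₂ → ¬ p ∣ b) :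
    Nat.gcd
      (d₁ * (∑ j ∈ Finset.range (Nat.totient (u₂ ^ 2 * (b - 1) ^ 2)), b ^ j) + (d₂ - d₁))
      (b ^ Nat.totient (u₂ ^ 2 * (b - 1) ^ 2) - 1) = u₂ :=
  stmt6_general b d₁ d₂ u₁ u₂ hb hd hfac h₁ h₂
end
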